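/- Let λ > 0 and β ∈ (0,1). For any embeddings U, V and weight vectors w₁, w₂ ∈ ℝ^k such that U and V are not both zero, the rescaled point (βU, βV, β⁻¹w₁, β⁻¹w₂) satisfies F(βU, βV, β⁻¹w₁, β⁻¹w₂) < F(U, V, w₁, w₂), where F is the generalized CF objective with the concatenation interaction. In particular, ⟨β⁻¹w₁, βu_i⟩ + ⟨β⁻¹w₂, βv_j⟩ = ⟨w₁, u_i⟩ + ⟨w₂, v_j⟩ for every (i,j), so the data-fitting term is unchanged while the regularization term is strictly decreased; hence no point with U and V not both zero is a global minimizer. -/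
import Mathlib


open Finset

/-- Generalized CF objective with the concatenation interaction `f(u,v) = [u; v]` and
weight vector `w = (w₁, w₂)`, so the linear predictor is `⟨w₁, u_i⟩ + ⟨w₂, v_j⟩`:
`F(U,V,w₁,w₂) = Σ_{(i,j)∈Ω} ℓ(⟨w₁,u_i⟩ + ⟨w₂,v_j⟩, O_{ij})
  + (λ/2)Σ_i ‖u_i‖² + (λ/2)Σ_j ‖v_j‖²`. -/
noncomputable def cfObjConcat {k m n : ℕ} (lam : ℝ) (Ω : Finset (Fin m × Fin n))
    (O : Fin m × Fin n → ℝ) (ℓ : ℝ × ℝ → ℝ)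
    (U : Fin m → Fin k → ℝ) (V : Fin n → Fin k → ℝ) (w₁ w₂ : Fin k → ℝ) : ℝ :=
  (∑ p ∈ Ω, ℓ ((∑ l, w₁ l * U p.1 l) + (∑ l, w₂ l * V p.2 l), O p))
    + lam / 2 * ∑ i, ∑ l, (U i l) ^ 2
    + lam / 2 * ∑ j, ∑ l, (V j l) ^ 2

/-- For `λ > 0` and `β ∈ (0,1)`, if `U` and `V` are not both zero, then
`F(βU, βV, β⁻¹w₁, β⁻¹w₂) < F(U, V, w₁, w₂)` for the concatenation interaction; the
data-fitting term is unchanged while the regularization term strictly decreases; hence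
no point with `U` and `V` not both zero is a global minimizer. -/
theorem rescaling_decreases_concat_objective {k m n : ℕ} (lam : ℝ) (hlam : 0 < lam)
    (β : ℝ) (hβ : β ∈ Set.Ioo (0 : ℝ) 1)
    (Ω : Finset (Fin m × Fin n)) (O : Fin m × Fin n → ℝ) (ℓ : ℝ × ℝ → ℝ)
    (U : Fin m → Fin k → ℝ) (V : Fin n → Fin k → ℝ) (w₁ w₂ : Fin k → ℝ)
    (hUV : ¬ (U = 0 ∧ V = 0)) :
    cfObjConcat lam Ω O ℓ (fun i l => β * U i l) (fun j l => β * V j l)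
        (fun l => β⁻¹ * w₁ l) (fun l => β⁻¹ * w₂ l)
      < cfObjConcat lam Ω O ℓ U V w₁ w₂ ∧
    (∀ i j, (∑ l, (β⁻¹ * w₁ l) * (β * U i l)) + (∑ l, (β⁻¹ * w₂ l) * (β * V j l))
        = (∑ l, w₁ l * U i l) + (∑ l, w₂ l * V j l)) ∧
    (lam / 2 * ∑ i, ∑ l, (β * U i l) ^ 2 + lam / 2 * ∑ j, ∑ l, (β * V j l) ^ 2
      < lam / 2 * ∑ i, ∑ l, (U i l) ^ 2 + lam / 2 * ∑ j, ∑ l, (V j l) ^ 2) ∧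
    (∃ (U' : Fin m → Fin k → ℝ) (V' : Fin n → Fin k → ℝ) (w₁' w₂' : Fin k → ℝ),
      cfObjConcat lam Ω O ℓ U' V' w₁' w₂' < cfObjConcat lam Ω O ℓ U V w₁ w₂) := by
  obtain ⟨hβ0, hβ1⟩ := hβ
  have hβne : β ≠ 0 := ne_of_gt hβ0
  have hinner : ∀ (i : Fin m) (j : Fin n),
      (∑ l, (β⁻¹ * w₁ l) * (β * U i l)) + (∑ l, (β⁻¹ * w₂ l) * (β * V j l))
        = (∑ l, w₁ l * U i l) + (∑ l, w₂ l * V j l) := by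
    intro i j
    congr 1 <;> exact Finset.sum_congr rfl (fun l _ => by field_simp)
  set SU := ∑ i, ∑ l, (U i l) ^ 2 with hSU
  set SV := ∑ j, ∑ l, (V j l) ^ 2 with hSV
  have hSUnn : 0 ≤ SU := Finset.sum_nonneg fun i _ =>
    Finset.sum_nonneg fun l _ => sq_nonneg _
  have hSVnn : 0 ≤ SV := Finset.sum_nonneg fun i _ =>
    Finset.sum_nonneg fun l _ => sq_nonneg _
  have hpos : 0 < SU + SV := by
    rcases not_and_or.mp hUV with h | h
    · have : 0 < SU := by
        rcases Function.ne_iff.mp h with ⟨i, hi⟩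
        rcases Function.ne_iff.mp hi with ⟨l, hl⟩
        have hl' : U i l ≠ 0 := hl
        have h1 : 0 < (U i l) ^ 2 := by positivity
        have h2 : (U i l) ^ 2 ≤ ∑ l', (U i l') ^ 2 :=
          Finset.single_le_sum (f := fun l' => (U i l') ^ 2)
            (fun l' _ => sq_nonneg _) (Finset.mem_univ l)
        have h3 : (∑ l', (U i l') ^ 2) ≤ SU :=
          Finset.single_le_sum (f := fun i' => ∑ l', (U i' l') ^ 2)
            (fun i' _ => Finset.sum_nonneg fun l' _ => sq_nonneg _)
            (Finset.mem_univ i)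
        linarith
      linarith
    · have : 0 < SV := by
        rcases Function.ne_iff.mp h with ⟨j, hj⟩
        rcases Function.ne_iff.mp hj with ⟨l, hl⟩
        have hl' : V j l ≠ 0 := hl
        have h1 : 0 < (V j l) ^ 2 := by positivity
        have h2 : (V j l) ^ 2 ≤ ∑ l', (V j l') ^ 2 :=
          Finset.single_le_sum (f := fun l' => (V j l') ^ 2)
            (fun l' _ => sq_nonneg _) (Finset.mem_univ l)
        have h3 : (∑ l', (V j l') ^ 2) ≤ SV :=
          Finset.single_le_sum (f := fun j' => ∑ l', (V j' l') ^ 2)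
            (fun j' _ => Finset.sum_nonneg fun l' _ => sq_nonneg _)
            (Finset.mem_univ j)
        linarith
      linarith
  have hSUβ : (∑ i, ∑ l, (β * U i l) ^ 2) = β ^ 2 * SU := by
    rw [hSU]; simp_rw [mul_pow, Finset.mul_sum]
  have hSVβ : (∑ j, ∑ l, (β * V j l) ^ 2) = β ^ 2 * SV := by
    rw [hSV]; simp_rw [mul_pow, Finset.mul_sum]
  have hβ2 : β ^ 2 < 1 := by nlinarith
  have hreg : lam / 2 * ∑ i, ∑ l, (β * U i l) ^ 2 + lam / 2 * ∑ j, ∑ l, (β * V j l) ^ 2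
      < lam / 2 * SU + lam / 2 * SV := by
    rw [hSUβ, hSVβ]
    nlinarith [mul_pos (mul_pos hlam hpos) (sub_pos.mpr hβ2)]
  have hloss : (∑ p ∈ Ω, ℓ ((∑ l, (β⁻¹ * w₁ l) * (β * U p.1 l))
        + (∑ l, (β⁻¹ * w₂ l) * (β * V p.2 l)), O p))
      = ∑ p ∈ Ω, ℓ ((∑ l, w₁ l * U p.1 l) + (∑ l, w₂ l * V p.2 l), O p) :=
    Finset.sum_congr rfl fun p _ => by rw [hinner p.1 p.2]
  have hmain : cfObjConcat lam Ω O ℓ (fun i l => β * U i l) (fun j l => β * V j l)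
        (fun l => β⁻¹ * w₁ l) (fun l => β⁻¹ * w₂ l)
      < cfObjConcat lam Ω O ℓ U V w₁ w₂ := by
    unfold cfObjConcat
    rw [hloss]
    linarith
  exact ⟨hmain, hinner, hreg, _, _, _, _, hmain⟩
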